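/- Bounded dual iterates of projected subgradient: Let (y^k) in R^m be defined by y^{k+1} = [y^k + γ(a_k x^k - d)]_+ with y^1 = 0, where γ > 0, ‖a_k‖_∞ ≤ ā, x^k ∈ [0,1] satisfies ⟨a_k x^k, y^k⟩ ≤ c̄, and d ∈ R^m satisfies 0 < d_lo ≤ d_i ≤ d̄ for all i. Then for all k, ‖y^k‖ ≤ m(ā+d̄)²γ/d_lo + √m(ā+d̄)γ + c̄/d_lo. -/

import Mathlib

/-!
Write `g k = x k • a k - d`, so `y (k + 1)` is the positive part of `y k + γ • g k`; taking
positive parts is nonexpansive, and `‖g k‖ ≤ G := √m (ā + d̄)`. Since `y k ≥ 0` and `d ≥ d_lo`,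
`⟪g k, y k⟫ ≤ c̄ - d_lo ‖y k‖`. Expanding `‖y + γ g‖²` shows that once
`d_lo ‖y k‖ ≥ γ G² + c̄` the step does not increase the norm, while below that radius it adds at
most `γ G`. Hence the ball of radius `(γ G² + c̄) / d_lo + γ G` is invariant.
-/

open scoped RealInnerProductSpace

namespace EuclideanSpace

variable {ι : Type*} [Fintype ι]

theorem norm_le_norm_of_abs_le {v w : EuclideanSpace ℝ ι} (h : ∀ i, |w i| ≤ |v i|) :
    ‖w‖ ≤ ‖v‖ := by
  simp only [EuclideanSpace.norm_eq, Real.norm_eq_abs]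
  exact Real.sqrt_le_sqrt (Finset.sum_le_sum fun i _ => pow_le_pow_left₀ (abs_nonneg _) (h i) 2)

theorem norm_le_sqrt_card_mul {v : EuclideanSpace ℝ ι} {C : ℝ} (h : ∀ i, |v i| ≤ C) :
    ‖v‖ ≤ √(Fintype.card ι) * C := by
  rcases isEmpty_or_nonempty ι with _ | ⟨⟨i₀⟩⟩
  · simp [EuclideanSpace.norm_eq]
  have hC : 0 ≤ C := (abs_nonneg _).trans (h i₀)
  calc ‖v‖ = √(∑ i, |v i| ^ 2) := by simp [EuclideanSpace.norm_eq]
    _ ≤ √(∑ _i : ι, C ^ 2) := by gcongr with i; exact h i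
    _ = √(Fintype.card ι) * C := by
      rw [Finset.sum_const, Finset.card_univ, nsmul_eq_mul, Real.sqrt_mul (Nat.cast_nonneg _),
        Real.sqrt_sq hC]

theorem norm_le_sum_of_nonneg {v : EuclideanSpace ℝ ι} (h : ∀ i, 0 ≤ v i) : ‖v‖ ≤ ∑ i, v i := by
  rw [EuclideanSpace.norm_eq, Real.sqrt_le_left (Finset.sum_nonneg fun i _ => h i)]
  simp only [Real.norm_eq_abs, sq_abs]
  exact Finset.sum_sq_le_sq_sum_of_nonneg fun i _ => h i

theorem mul_norm_le_inner_of_le {c : ℝ} {d y : EuclideanSpace ℝ ι} (hc : 0 ≤ c)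
    (hd : ∀ i, c ≤ d i) (hy : ∀ i, 0 ≤ y i) : c * ‖y‖ ≤ ⟪d, y⟫ := by
  calc c * ‖y‖ ≤ c * ∑ i, y i := by gcongr; exact norm_le_sum_of_nonneg hy
    _ = ∑ i, c * y i := Finset.mul_sum _ _ _
    _ ≤ ∑ i, d i * y i :=
      Finset.sum_le_sum fun i _ => mul_le_mul_of_nonneg_right (hd i) (hy i)
    _ = ⟪d, y⟫ := by simp [PiLp.inner_apply, mul_comm]

theorem norm_toLp_max_zero_le (v : EuclideanSpace ℝ ι) :
    ‖(WithLp.toLp 2 (fun i => max (v i) 0) : EuclideanSpace ℝ ι)‖ ≤ ‖v‖ :=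
  norm_le_norm_of_abs_le fun _ =>
    abs_le.2 ⟨(neg_abs_le _).trans (le_max_left _ _), max_le (le_abs_self _) (abs_nonneg _)⟩

end EuclideanSpace

section InnerProductSpace

variable {E : Type*} [NormedAddCommGroup E] [InnerProductSpace ℝ E]

theorem norm_add_smul_le_of_inner_le {y g : E} {γ G c δ R : ℝ} (hγ : 0 ≤ γ) (hδ : 0 ≤ δ)
    (hg : ‖g‖ ≤ G) (hgy : ⟪g, y⟫ ≤ c - δ * ‖y‖) (hR : γ * G ^ 2 + c ≤ δ * R)
    (hy : ‖y‖ ≤ R + γ * G) : ‖y + γ • g‖ ≤ R + γ * G := by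
  rcases le_total ‖y‖ R with hyR | hRy
  · calc ‖y + γ • g‖ ≤ ‖y‖ + γ * ‖g‖ := by
          simpa [norm_smul, abs_of_nonneg hγ] using norm_add_le y (γ • g)
      _ ≤ R + γ * G := by gcongr
  · suffices ‖y + γ • g‖ ^ 2 ≤ ‖y‖ ^ 2 from
      (pow_le_pow_iff_left₀ (norm_nonneg _) (norm_nonneg _) two_ne_zero).1 this |>.trans hy
    have hexpand : ‖y + γ • g‖ ^ 2 = ‖y‖ ^ 2 + γ * (2 * ⟪g, y⟫ + γ * ‖g‖ ^ 2) := by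
      rw [norm_add_sq_real, real_inner_smul_right, real_inner_comm, norm_smul,
        Real.norm_of_nonneg hγ]
      ring
    have hdescent : 2 * ⟪g, y⟫ + γ * ‖g‖ ^ 2 ≤ 0 := by
      have hg2 : γ * ‖g‖ ^ 2 ≤ γ * G ^ 2 := by gcongr
      nlinarith [mul_le_mul_of_nonneg_left hRy hδ, mul_nonneg hγ (sq_nonneg G)]
    rw [hexpand]
    nlinarith [mul_nonpos_of_nonneg_of_nonpos hγ hdescent]

end InnerProductSpace

theorem abs_mul_sub_le {t a b A B : ℝ} (ht : t ∈ Set.Icc (0 : ℝ) 1) (ha : |a| ≤ A)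
    (hb : |b| ≤ B) : |t * a - b| ≤ A + B := by
  have hta : |t * a| ≤ A := by
    rw [abs_mul, abs_of_nonneg ht.1]
    nlinarith [ht.2, abs_nonneg a]
  exact (abs_sub _ _).trans (add_le_add hta hb)

theorem dual_iterates_bounded_general {m : ℕ} (γ abar cbar dbar dlo : ℝ)
    (y : ℕ → EuclideanSpace ℝ (Fin m)) (a : ℕ → EuclideanSpace ℝ (Fin m))
    (x : ℕ → ℝ) (d : EuclideanSpace ℝ (Fin m))
    (hγ : 0 < γ) (hdlo : 0 < dlo)
    (hy1 : y 1 = 0)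
    (hrec : ∀ k, y (k + 1) =
      (WithLp.toLp 2 (fun i => max ((y k + γ • (x k • a k - d)) i) 0) : EuclideanSpace ℝ (Fin m)))
    (ha : ∀ k i, |a k i| ≤ abar)
    (hx : ∀ k, x k ∈ Set.Icc (0 : ℝ) 1)
    (hc : ∀ k, ⟪x k • a k, y k⟫ ≤ cbar)
    (hd : ∀ i, dlo ≤ d i ∧ d i ≤ dbar) :
    ∀ k, 1 ≤ k →
      ‖y k‖ ≤ m * (abar + dbar) ^ 2 * γ / dlo + Real.sqrt m * (abar + dbar) * γ
        + cbar / dlo := by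
  set G := √m * (abar + dbar) with hG
  have hgrad (k : ℕ) : ‖x k • a k - d‖ ≤ G := by
    simpa using EuclideanSpace.norm_le_sqrt_card_mul fun i => abs_mul_sub_le (hx k) (ha k i)
      (abs_le.2 ⟨by linarith [hd i], (hd i).2⟩)
  have hy_nonneg (k : ℕ) (hk : 1 ≤ k) (i : Fin m) : 0 ≤ y k i := by
    obtain ⟨j, rfl⟩ := Nat.exists_eq_add_of_le' hk
    rw [hrec j]
    exact le_max_right _ _
  have hdrift (k : ℕ) (hk : 1 ≤ k) : ⟪x k • a k - d, y k⟫ ≤ cbar - dlo * ‖y k‖ := by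
    rw [inner_sub_left]
    linarith [hc k, EuclideanSpace.mul_norm_le_inner_of_le hdlo.le (fun i => (hd i).1)
      (hy_nonneg k hk)]
  have hR : γ * G ^ 2 + cbar = dlo * (m * (abar + dbar) ^ 2 * γ / dlo + cbar / dlo) := by
    rw [hG, mul_pow, Real.sq_sqrt (Nat.cast_nonneg _)]
    field_simp
  intro k hk
  induction k, hk using Nat.le_induction with
  | base =>
    have hG0 : 0 ≤ G := (norm_nonneg _).trans (hgrad 1)
    have hcbar : 0 ≤ cbar := by simpa [hy1] using hc 1
    rw [hy1, norm_zero]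
    positivity
  | succ k hk ih =>
    rw [hrec k]
    refine (EuclideanSpace.norm_toLp_max_zero_le _).trans ?_
    have := norm_add_smul_le_of_inner_le hγ.le hdlo.le (hgrad k) (hdrift k hk) hR.le
      (by linarith)
    linarith

theorem dual_iterates_bounded {m : ℕ} (γ abar cbar dbar dlo : ℝ)
    (y : ℕ → EuclideanSpace ℝ (Fin m)) (a : ℕ → EuclideanSpace ℝ (Fin m))
    (x : ℕ → ℝ) (d : EuclideanSpace ℝ (Fin m))
    (hγ : 0 < γ) (habar : 0 ≤ abar) (hcbar : 0 ≤ cbar) (hdbar : 0 ≤ dbar)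
    (hdlo : 0 < dlo)
    (hy1 : y 1 = 0)
    (hrec : ∀ k, y (k + 1) =
      (WithLp.toLp 2 (fun i => max ((y k + γ • (x k • a k - d)) i) 0) : EuclideanSpace ℝ (Fin m)))
    (ha : ∀ k i, |a k i| ≤ abar)
    (hx : ∀ k, x k ∈ Set.Icc (0 : ℝ) 1)
    (hc : ∀ k, ⟪x k • a k, y k⟫ ≤ cbar)
    (hd : ∀ i, dlo ≤ d i ∧ d i ≤ dbar) :
    ∀ k, 1 ≤ k →
      ‖y k‖ ≤ m * (abar + dbar) ^ 2 * γ / dlo + Real.sqrt m * (abar + dbar) * γ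
        + cbar / dlo :=
  dual_iterates_bounded_general γ abar cbar dbar dlo y a x d hγ hdlo hy1 hrec ha hx hc hd
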